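/- arXiv:2208.05584 — 8 statements merged into one kernel-verified Lean document; each statement's English description precedes it below -/
import Mathlib

section
/- For every integer n with 2 ≤ n ≤ 14 and every collection of unit vectors v₁, …, vₙ in ℝⁿ (with the Euclidean inner product and norm), one has sup_{‖x‖ = 1} |⟨x, v₁⟩ · ⟨x, v₂⟩ ⋯ ⟨x, vₙ⟩| ≥ n^{-n/2}. -/
open scoped RealInnerProductSpace

/-!
Choose signs `εᵢ = ±1` maximising `‖s‖` for `s = ∑ εᵢ vᵢ`. Flipping one sign cannot increase
`‖s‖`, which gives `rᵢ := ⟪εᵢ vᵢ, s⟫ ≥ 1`; moreover `rᵢ ≤ ‖s‖ =: u` and `∑ rᵢ = u²`. At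
`x = s / u` the product is `∏ rᵢ / uⁿ`, so it suffices to show `uⁿ ≤ √nⁿ ∏ rᵢ` on the slice
`{r ∈ [1, u]ⁿ | ∑ rᵢ = u²}`.

On this compact slice the product attains its minimum at a point with at most one coordinate `ρ`
outside `{1, u}`, because spreading two interior coordinates apart at fixed sum lowers their
product. If `k` coordinates equal `u` and `m = n - k`, then `ρ = u² - k u - (m - 1)` and the claim
reads `uᵐ ≤ √nⁿ ρ`. The function `y ↦ (y² - k y - (m - 1)) / yᵐ` first increases and then
decreases, so on the interval where `1 ≤ ρ ≤ u` it is smallest at an endpoint; the endpoints are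
the positive roots of `α² = k α + m` and of the same equation for `(k + 1, m - 1)`. What remains
is `α ^ (2 m) ≤ nⁿ` for the positive root of `α² = k α + m` with `k + m = n`: writing
`α ^ (2 m) = A α + B` with integers `A, B` turns this into an exact integer inequality, checked
for all `n ≤ 14` (it fails for `n = 15`).
-/

open Set

noncomputable def posRoot (p q : ℝ) : ℝ := (p + √(p ^ 2 + 4 * q)) / 2

section PosRoot

variable {p q x : ℝ}

lemma posRoot_sq (hq : 0 ≤ q) : posRoot p q ^ 2 = p * posRoot p q + q := by
  have := Real.sq_sqrt (show 0 ≤ p ^ 2 + 4 * q by positivity)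
  unfold posRoot
  linear_combination this / 4

lemma abs_lt_sqrt_sq_add (hq : 0 < q) : |p| < √(p ^ 2 + 4 * q) := by
  rw [← Real.sqrt_sq_eq_abs]
  exact Real.sqrt_lt_sqrt (sq_nonneg p) (by linarith)

lemma posRoot_pos (hq : 0 < q) : 0 < posRoot p q := by
  have := abs_lt_sqrt_sq_add (p := p) hq
  unfold posRoot
  linarith [neg_abs_le p]

lemma posRoot_le_of_le_sq (hq : 0 < q) (hx : 0 ≤ x) (h : p * x + q ≤ x ^ 2) :
    posRoot p q ≤ x := by
  have hs := Real.sq_sqrt (show 0 ≤ p ^ 2 + 4 * q by positivity)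
  have hp := abs_lt_sqrt_sq_add (p := p) hq
  set s := √(p ^ 2 + 4 * q)
  -- `x ^ 2 - p x - q = (x - posRoot p q) (x - (p - s) / 2)`, and the second root is negative
  have hβ : 0 < x - (p - s) / 2 := by linarith [le_abs_self p]
  unfold posRoot
  nlinarith

lemma le_posRoot_of_sq_le (hq : 0 ≤ q) (h : x ^ 2 ≤ p * x + q) : x ≤ posRoot p q := by
  have hs := Real.sq_sqrt (show 0 ≤ p ^ 2 + 4 * q by positivity)
  have hs0 := Real.sqrt_nonneg (p ^ 2 + 4 * q)
  set s := √(p ^ 2 + 4 * q)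
  unfold posRoot
  nlinarith

end PosRoot

def powCoeffs (k m : ℕ) : ℕ → ℕ × ℕ
  | 0 => (0, 1)
  | j + 1 => let c := powCoeffs k m j; (k * c.1 + c.2, m * c.1)

lemma pow_eq_powCoeffs {k m : ℕ} {x : ℝ} (hx : x ^ 2 = k * x + m) (j : ℕ) :
    x ^ j = (powCoeffs k m j).1 * x + (powCoeffs k m j).2 := by
  induction j with
  | zero => simp [powCoeffs]
  | succ j ih =>
    simp only [powCoeffs, Nat.cast_add, Nat.cast_mul]
    linear_combination x * ih + ((powCoeffs k m j).1 : ℝ) * hx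

/-- As `posRoot k m ^ j = A * posRoot k m + B` for `(A, B) = powCoeffs k m j`, the bound
`posRoot k m ^ j ≤ C` follows from `posRoot k m ≤ q := (C - B) / A`, i.e. from `k q + m ≤ q²`;
this is that inequality with denominators cleared. -/
def PowBoundCert (k m j C : ℕ) : Prop :=
  (powCoeffs k m j).2 ≤ C ∧
    k * (C - (powCoeffs k m j).2) * (powCoeffs k m j).1 + m * (powCoeffs k m j).1 ^ 2 ≤
      (C - (powCoeffs k m j).2) ^ 2

instance (k m j C : ℕ) : Decidable (PowBoundCert k m j C) := by
  unfold PowBoundCert; infer_instance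

lemma posRoot_pow_le_of_cert {k m j C : ℕ} (hm : 0 < m) (h : PowBoundCert k m j C) :
    posRoot k m ^ j ≤ C := by
  have hpow := pow_eq_powCoeffs (posRoot_sq (p := k) (Nat.cast_nonneg m)) j
  obtain ⟨hBC, hcert⟩ := h
  set A := (powCoeffs k m j).1
  set B := (powCoeffs k m j).2
  rw [hpow]
  rcases Nat.eq_zero_or_pos A with hA | hA
  · simpa [hA] using hBC
  have hA' : (0 : ℝ) < A := by exact_mod_cast hA
  have hcert' : (k : ℝ) * (C - B) * A + m * A ^ 2 ≤ (C - B) ^ 2 := by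
    have := (Nat.cast_le (α := ℝ)).2 hcert
    push_cast [Nat.cast_sub hBC] at this
    exact this
  have hroot : posRoot k m ≤ (C - B) / A := by
    apply posRoot_le_of_le_sq (by exact_mod_cast hm)
    · exact div_nonneg (by simpa using (Nat.cast_le (α := ℝ)).2 hBC) hA'.le
    · rw [div_pow, le_div_iff₀ (by positivity)]
      calc _ = (k : ℝ) * (C - B) * A + m * A ^ 2 := by field_simp
        _ ≤ _ := hcert'
  calc (A : ℝ) * posRoot k m + B ≤ A * ((C - B) / A) + B := by gcongr
    _ = C := by field_simp; ring

set_option maxRecDepth 10000 in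
lemma powBoundCert_two_mul {k m : ℕ} (hm : 1 ≤ m) (hkm : k + m ≤ 14) :
    PowBoundCert k m (2 * m) ((k + m) ^ (k + m)) := by
  have hcert : ∀ k < 14, ∀ m < 15, 1 ≤ m → k + m ≤ 14 →
      PowBoundCert k m (2 * m) ((k + m) ^ (k + m)) := by decide
  exact hcert k (by omega) m (by omega) hm hkm

lemma posRoot_pow_le_sqrt_pow {k m : ℕ} (hm : 1 ≤ m) (hkm : k + m ≤ 14) :
    posRoot k m ^ m ≤ √(k + m : ℕ) ^ (k + m) := by
  have ha := (posRoot_pos (p := k) (q := m) (by exact_mod_cast hm)).le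
  rw [← pow_le_pow_iff_left₀ (by positivity) (by positivity) two_ne_zero]
  calc (posRoot k m ^ m) ^ 2 = posRoot k m ^ (2 * m) := by ring
    _ ≤ ((k + m : ℕ) : ℝ) ^ (k + m) := by
      exact_mod_cast posRoot_pow_le_of_cert hm (powBoundCert_two_mul hm hkm)
    _ = (√(k + m : ℕ) ^ (k + m)) ^ 2 := by
      rw [← pow_mul, mul_comm, pow_mul, Real.sq_sqrt (by positivity)]

section QuadRatio

variable {k : ℝ} {m : ℕ}

noncomputable def quadRatio (k : ℝ) (m : ℕ) (y : ℝ) : ℝ := (y ^ 2 - k * y - (m - 1)) / y ^ m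

def quadRatioDerivNum (k : ℝ) (m : ℕ) (y : ℝ) : ℝ := (2 - m) * y ^ 2 + k * (m - 1) * y + m * (m - 1)

lemma hasDerivAt_quadRatio (hm : 1 ≤ m) {x : ℝ} (hx : x ≠ 0) :
    HasDerivAt (quadRatio k m) (quadRatioDerivNum k m x / x ^ (m + 1)) x := by
  obtain ⟨m, rfl⟩ := Nat.exists_eq_add_of_le' hm
  have hnum : HasDerivAt (fun y : ℝ => y ^ 2 - k * y - ((↑(m + 1) : ℝ) - 1)) (2 * x - k) x := by
    simpa [mul_comm] using
      ((hasDerivAt_pow 2 x).sub ((hasDerivAt_id x).const_mul k)).sub_const ((↑(m + 1) : ℝ) - 1)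
  have hden : HasDerivAt (fun y : ℝ => y ^ (m + 1)) ((↑(m + 1) : ℝ) * x ^ m) x := by
    simpa using hasDerivAt_pow (m + 1) x
  refine (hnum.div hden (pow_ne_zero _ hx)).congr_deriv ?_
  rw [div_eq_div_iff (pow_ne_zero _ (pow_ne_zero _ hx)) (pow_ne_zero _ hx), quadRatioDerivNum]
  push_cast
  ring

/-- `quadRatioDerivNum k m y / y²` is antitone on `(0, ∞)`, so `quadRatio k m` first increases
and then decreases. -/
lemma quadRatioDerivNum_mul_sq_le (hk : 0 ≤ k) (hm : 1 ≤ m) {x y : ℝ} (hx : 0 < x) (hxy : x ≤ y) :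
    quadRatioDerivNum k m y * x ^ 2 ≤ quadRatioDerivNum k m x * y ^ 2 := by
  have hm' : (0 : ℝ) ≤ m - 1 := by simpa using (Nat.one_le_cast (α := ℝ)).2 hm
  have key : quadRatioDerivNum k m x * y ^ 2 - quadRatioDerivNum k m y * x ^ 2
      = (y - x) * (m - 1) * (k * x * y + m * (x + y)) := by
    simp only [quadRatioDerivNum]; ring
  have : 0 ≤ (y - x) * (m - 1) * (k * x * y + m * (x + y)) := by
    have hy : 0 < y := hx.trans_le hxy
    have : 0 ≤ k * x * y + m * (x + y) := by positivity
    exact mul_nonneg (mul_nonneg (by linarith) hm') this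
  linarith

lemma quadRatio_le_or_quadRatio_le (hk : 0 ≤ k) (hm : 1 ≤ m) {a u b : ℝ} (ha : 0 < a) (hau : a ≤ u)
    (hub : u ≤ b) : quadRatio k m a ≤ quadRatio k m u ∨ quadRatio k m b ≤ quadRatio k m u := by
  have hderiv : ∀ x, 0 < x → HasDerivAt (quadRatio k m) (quadRatioDerivNum k m x / x ^ (m + 1)) x :=
    fun x hx => hasDerivAt_quadRatio hm hx.ne'
  have hcont : ∀ c d, 0 < c → ContinuousOn (quadRatio k m) (Icc c d) := fun c d hc x hx =>
    (hderiv x (hc.trans_le hx.1)).continuousAt.continuousWithinAt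
  rcases le_total 0 (quadRatioDerivNum k m u) with hQ | hQ
  · left
    refine monotoneOn_of_hasDerivWithinAt_nonneg (convex_Icc a u) (hcont a u ha)
      (fun x hx => (hderiv x ?_).hasDerivWithinAt) (fun x hx => ?_)
      (left_mem_Icc.2 hau) (right_mem_Icc.2 hau) hau <;> rw [interior_Icc] at hx
    · exact ha.trans hx.1
    have hx0 : 0 < x := ha.trans hx.1
    have := quadRatioDerivNum_mul_sq_le hk hm hx0 hx.2.le
    have : 0 ≤ quadRatioDerivNum k m x := by
      nlinarith [mul_nonneg hQ (sq_nonneg x), sq_pos_of_pos (ha.trans_le hau)]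
    positivity
  · right
    have hu : 0 < u := ha.trans_le hau
    refine antitoneOn_of_hasDerivWithinAt_nonpos (convex_Icc u b) (hcont u b hu)
      (fun x hx => (hderiv x ?_).hasDerivWithinAt) (fun x hx => ?_)
      (left_mem_Icc.2 hub) (right_mem_Icc.2 hub) hub <;> rw [interior_Icc] at hx
    · exact hu.trans hx.1
    have hx0 : 0 < x := hu.trans hx.1
    have := quadRatioDerivNum_mul_sq_le hk hm hu hx.1.le
    have : quadRatioDerivNum k m x ≤ 0 := by
      nlinarith [mul_nonpos_of_nonpos_of_nonneg hQ (sq_nonneg x), sq_pos_of_pos hu]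
    exact div_nonpos_of_nonpos_of_nonneg this (by positivity)

end QuadRatio

lemma pow_le_posRoot_pow_mul_or {k : ℝ} {m : ℕ} (hk : 0 ≤ k) (hm : 1 ≤ m) {u : ℝ}
    (hρ1 : 1 ≤ u ^ 2 - k * u - (m - 1)) (hρu : u ^ 2 - k * u - (m - 1) ≤ u) :
    u ^ m ≤ posRoot k m ^ m * (u ^ 2 - k * u - (m - 1)) ∨
      u ^ m ≤ posRoot (k + 1) (m - 1) ^ (m - 1) * (u ^ 2 - k * u - (m - 1)) := by
  set ρ := u ^ 2 - k * u - (m - 1)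
  have hm' : (1 : ℝ) ≤ m := by exact_mod_cast hm
  set a := posRoot k m
  set b := posRoot (k + 1) (m - 1)
  have hu : 0 < u := by linarith
  have ha : 0 < a := posRoot_pos (by linarith)
  have hau : a ≤ u := posRoot_le_of_le_sq (by linarith) hu.le (by linarith)
  have hub : u ≤ b := le_posRoot_of_sq_le (by linarith) (by linarith)
  have hb : 0 < b := hu.trans_le hub
  have ha2 : a ^ 2 - k * a - (m - 1) = 1 := by linarith [posRoot_sq (p := k) (q := m) (by linarith)]
  have hb2 : b ^ 2 - k * b - (m - 1) = b := by
    linarith [posRoot_sq (p := k + 1) (q := m - 1) (by linarith)]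
  have hqa : quadRatio k m a = 1 / a ^ m := by rw [quadRatio, ha2]
  have hqb : quadRatio k m b = 1 / b ^ (m - 1) := by
    rw [quadRatio, hb2, ← pow_sub_one_mul (by omega : m ≠ 0) b, div_mul_cancel_right₀ hb.ne',
      one_div]
  have hqu : quadRatio k m u = ρ / u ^ m := rfl
  rcases quadRatio_le_or_quadRatio_le hk hm ha hau hub with h | h
  · left
    rw [hqa, hqu, div_le_div_iff₀ (by positivity) (by positivity)] at h
    linarith
  · right
    rw [hqb, hqu, div_le_div_iff₀ (by positivity) (by positivity)] at h
    linarith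

lemma pow_le_sqrt_pow_mul {k m n : ℕ} (hm : 1 ≤ m) (hkmn : k + m = n) (hn : n ≤ 14) {u : ℝ}
    (hρ1 : 1 ≤ u ^ 2 - k * u - (m - 1)) (hρu : u ^ 2 - k * u - (m - 1) ≤ u) :
    u ^ m ≤ √n ^ n * (u ^ 2 - k * u - (m - 1)) := by
  have hρ0 : 0 ≤ u ^ 2 - k * u - (m - 1) := by linarith
  rcases pow_le_posRoot_pow_mul_or (Nat.cast_nonneg k) hm hρ1 hρu with h | h
  · refine h.trans (mul_le_mul_of_nonneg_right ?_ hρ0)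
    subst hkmn
    exact posRoot_pow_le_sqrt_pow hm hn
  · refine h.trans (mul_le_mul_of_nonneg_right ?_ hρ0)
    obtain rfl | ⟨m, rfl⟩ : m = 1 ∨ ∃ m', m = m' + 1 + 1 := by
      rcases m with _ | _ | m <;> simp_all
    · simpa using one_le_pow₀ (Real.one_le_sqrt.2 (by exact_mod_cast (by omega : 1 ≤ n)))
    · have := posRoot_pow_le_sqrt_pow (k := k + 1) (m := m + 1) (by omega) (by omega)
      rw [show k + 1 + (m + 1) = n by omega] at this
      simpa using this

lemma Finset.exists_sum_eq_prod_eq_of_forall_eq_one_or_eq {ι : Type*} [DecidableEq ι]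
    {s : Finset ι} {f : ι → ℝ} {u : ℝ} (h : ∀ i ∈ s, f i = 1 ∨ f i = u) :
    ∃ k ≤ s.card, ∑ i ∈ s, f i = k * u + (s.card - k) ∧ ∏ i ∈ s, f i = u ^ k := by
  induction s using Finset.induction_on with
  | empty => exact ⟨0, le_rfl, by simp, by simp⟩
  | insert a s has ih =>
    obtain ⟨k, hks, hsum, hprod⟩ := ih fun i hi => h i (Finset.mem_insert_of_mem hi)
    rw [Finset.sum_insert has, Finset.prod_insert has, Finset.card_insert_of_notMem has, hsum,
      hprod]
    rcases h a (Finset.mem_insert_self a s) with ha | ha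
    · exact ⟨k, by omega, by rw [ha]; push_cast; ring, by rw [ha, one_mul]⟩
    · exact ⟨k + 1, by omega, by rw [ha]; push_cast; ring, by rw [ha, pow_succ']⟩

section BoxSlice

variable {ι : Type*} [Fintype ι] {u c : ℝ}

def boxSlice (ι : Type*) [Fintype ι] (u c : ℝ) : Set (ι → ℝ) :=
  Set.univ.pi (fun _ => Icc 1 u) ∩ {r | ∑ i, r i = c}

lemma isCompact_boxSlice : IsCompact (boxSlice ι u c) :=
  (isCompact_univ_pi fun _ => isCompact_Icc).inter_right
    (isClosed_eq (continuous_finsetSum _ fun i _ => continuous_apply i) continuous_const)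

variable [DecidableEq ι]

lemma exists_prod_lt_of_mem_Ioo {r : ι → ℝ} (hr : r ∈ boxSlice ι u c) {i j : ι} (hij : i ≠ j)
    (hi : r i ∈ Ioo 1 u) (hj : r j ∈ Ioo 1 u) (hle : r i ≤ r j) :
    ∃ r' ∈ boxSlice ι u c, ∏ l, r' l < ∏ l, r l := by
  obtain ⟨hbox, hsum : ∑ l, r l = c⟩ := hr
  set t := min (r i - 1) (u - r j)
  have ht : 0 < t := lt_min (by linarith [hi.1]) (by linarith [hj.2])
  set r' := Function.update (Function.update r i (r i - t)) j (r j + t)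
  have hr'i : r' i = r i - t := by simp [r', hij]
  have hr'j : r' j = r j + t := by simp [r']
  have hr'l : ∀ l, l ≠ i → l ≠ j → r' l = r l := fun l hli hlj => by simp [r', hli, hlj]
  have hcompl : ∀ l ∈ ({i, j} : Finset ι)ᶜ, r' l = r l := fun l hl => by
    simp only [Finset.mem_compl, Finset.mem_insert, Finset.mem_singleton, not_or] at hl
    exact hr'l l hl.1 hl.2
  refine ⟨r', ⟨fun l _ => ?_, ?_⟩, ?_⟩
  · by_cases hlj : l = j
    · subst hlj; rw [hr'j]; constructor <;> linarith [hj.1, min_le_right (r i - 1) (u - r l)]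
    by_cases hli : l = i
    · subst hli; rw [hr'i]; constructor <;> linarith [hi.2, min_le_left (r l - 1) (u - r j)]
    rw [hr'l l hli hlj]; exact hbox l trivial
  · show ∑ l, r' l = c
    rw [← hsum, ← Finset.sum_add_sum_compl {i, j}, ← Finset.sum_add_sum_compl {i, j} r,
      Finset.sum_pair hij, Finset.sum_pair hij, Finset.sum_congr rfl hcompl, hr'i, hr'j]
    ring
  · rw [← Finset.prod_mul_prod_compl {i, j}, ← Finset.prod_mul_prod_compl {i, j} r,
      Finset.prod_pair hij, Finset.prod_pair hij, Finset.prod_congr rfl hcompl, hr'i, hr'j]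
    have hrest : 0 < ∏ l ∈ ({i, j} : Finset ι)ᶜ, r l :=
      Finset.prod_pos fun l _ => zero_lt_one.trans_le (hbox l trivial).1
    have : (r i - t) * (r j + t) < r i * r j := by nlinarith
    gcongr

lemma IsMinOn.exists_forall_ne_eq_one_or_eq [Nonempty ι] {r : ι → ℝ}
    (hmin : IsMinOn (fun r => ∏ i, r i) (boxSlice ι u c) r) (hr : r ∈ boxSlice ι u c) :
    ∃ i₀, ∀ i ≠ i₀, r i = 1 ∨ r i = u := by
  have hend : ∀ i, r i ∉ Ioo 1 u → r i = 1 ∨ r i = u := fun i hi => by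
    obtain ⟨h1, hu⟩ := hr.1 i trivial
    rw [mem_Ioo, not_and_or, not_lt, not_lt] at hi
    rcases hi with hi | hi
    · exact Or.inl (le_antisymm hi h1)
    · exact Or.inr (le_antisymm hu hi)
  by_cases h : ∃ i₀, r i₀ ∈ Ioo 1 u
  · obtain ⟨i₀, hi₀⟩ := h
    refine ⟨i₀, fun i hi => hend i fun hi' => ?_⟩
    obtain ⟨r', hr', hlt⟩ : ∃ r' ∈ boxSlice ι u c, ∏ l, r' l < ∏ l, r l := by
      rcases le_total (r i) (r i₀) with hle | hle
      · exact exists_prod_lt_of_mem_Ioo hr hi hi' hi₀ hle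
      · exact exists_prod_lt_of_mem_Ioo hr (Ne.symm hi) hi₀ hi' hle
    exact (hmin hr').not_gt hlt
  · simp only [not_exists] at h
    exact ⟨Classical.arbitrary ι, fun i _ => hend i (h i)⟩

end BoxSlice

lemma pow_le_sqrt_pow_mul_prod_of_eq_one_or_eq {n : ℕ} {u : ℝ} (hn : n ≤ 14) {r : Fin n → ℝ}
    (hr : r ∈ boxSlice (Fin n) u (u ^ 2)) (i₀ : Fin n) (h : ∀ i ≠ i₀, r i = 1 ∨ r i = u) :
    u ^ n ≤ √n ^ n * ∏ i, r i := by
  obtain ⟨hbox, hsum : ∑ i, r i = u ^ 2⟩ := hr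
  obtain ⟨k, hk, hsum', hprod'⟩ := Finset.exists_sum_eq_prod_eq_of_forall_eq_one_or_eq
    (s := Finset.univ.erase i₀) (f := r) (u := u) fun i hi => h i (Finset.ne_of_mem_erase hi)
  have hn1 : 1 ≤ n := Fin.pos i₀
  rw [Finset.card_erase_of_mem (Finset.mem_univ _), Finset.card_univ, Fintype.card_fin] at hk hsum'
  rw [Nat.cast_sub hn1, Nat.cast_one] at hsum'
  rw [← Finset.add_sum_erase _ _ (Finset.mem_univ i₀), hsum'] at hsum
  rw [← Finset.mul_prod_erase _ _ (Finset.mem_univ i₀), hprod']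
  have hρ : r i₀ = u ^ 2 - k * u - ((n - k : ℕ) - 1) := by
    rw [Nat.cast_sub (by omega)]; linarith
  have := pow_le_sqrt_pow_mul (k := k) (m := n - k) (by omega) (by omega) hn
    (u := u) (hρ ▸ (hbox i₀ trivial).1) (hρ ▸ (hbox i₀ trivial).2)
  rw [← hρ] at this
  have hu : 0 ≤ u := by linarith [(hbox i₀ trivial).1, (hbox i₀ trivial).2]
  calc u ^ n = u ^ k * u ^ (n - k) := by rw [← pow_add]; congr 1; omega
    _ ≤ u ^ k * (√n ^ n * r i₀) := by gcongr
    _ = √n ^ n * (r i₀ * u ^ k) := by ring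

lemma pow_le_sqrt_pow_mul_prod {n : ℕ} {u : ℝ} (hn0 : 1 ≤ n) (hn : n ≤ 14) {r : Fin n → ℝ}
    (hr : r ∈ boxSlice (Fin n) u (u ^ 2)) : u ^ n ≤ √n ^ n * ∏ i, r i := by
  have : Nonempty (Fin n) := ⟨⟨0, hn0⟩⟩
  obtain ⟨r₀, hr₀, hmin⟩ := isCompact_boxSlice.exists_isMinOn ⟨r, hr⟩
    (continuous_finsetProd _ fun i _ => continuous_apply i).continuousOn
  obtain ⟨i₀, hi₀⟩ := hmin.exists_forall_ne_eq_one_or_eq hr₀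
  calc u ^ n ≤ √n ^ n * ∏ i, r₀ i := pow_le_sqrt_pow_mul_prod_of_eq_one_or_eq hn hr₀ i₀ hi₀
    _ ≤ √n ^ n * ∏ i, r i := mul_le_mul_of_nonneg_left (hmin hr) (by positivity)

section Signs

variable {E : Type*} [NormedAddCommGroup E] [InnerProductSpace ℝ E]

lemma one_le_inner_of_norm_sub_two_smul_le {s w : E} (hw : ‖w‖ = 1)
    (h : ‖s - (2 : ℝ) • w‖ ≤ ‖s‖) : 1 ≤ ⟪w, s⟫ := by
  have hsq : ‖s - (2 : ℝ) • w‖ ^ 2 ≤ ‖s‖ ^ 2 := pow_le_pow_left₀ (norm_nonneg _) h 2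
  rw [norm_sub_sq_real, norm_smul, real_inner_smul_right, real_inner_comm, hw] at hsq
  norm_num at hsq
  linarith

lemma exists_sign_one_le_inner_sum {ι : Type*} [Fintype ι] [DecidableEq ι] (v : ι → E)
    (hv : ∀ i, ‖v i‖ = 1) :
    ∃ ε : ι → ℝ, (∀ i, |ε i| = 1) ∧ ∀ i, 1 ≤ ⟪ε i • v i, ∑ j, ε j • v j⟫ := by
  set signs := Fintype.piFinset fun _ : ι => ({1, -1} : Finset ℝ)
  obtain ⟨ε, hε, hmax⟩ := signs.exists_max_image (fun ε => ‖∑ j, ε j • v j‖)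
    ⟨fun _ => 1, Fintype.mem_piFinset.2 fun _ => by simp⟩
  have habs : ∀ i, |ε i| = 1 := fun i => by
    rcases (by simpa using Fintype.mem_piFinset.1 hε i : ε i = 1 ∨ ε i = -1) with h | h <;> simp [h]
  refine ⟨ε, habs, fun i => one_le_inner_of_norm_sub_two_smul_le ?_ ?_⟩
  · rw [norm_smul, hv, Real.norm_eq_abs, habs, one_mul]
  · set ε' := Function.update ε i (-ε i)
    have hε' : ε' ∈ signs := Fintype.mem_piFinset.2 fun j => by
      rcases eq_or_ne j i with rfl | hj
      · rcases (by simpa using Fintype.mem_piFinset.1 hε j : ε j = 1 ∨ ε j = -1) with h | h <;>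
          simp [ε', h]
      · simpa [ε', hj] using Fintype.mem_piFinset.1 hε j
    have hflip : ∑ j, ε' j • v j = ∑ j, ε j • v j - (2 : ℝ) • (ε i • v i) := by
      rw [eq_sub_iff_add_eq, ← Finset.sum_erase_add _ _ (Finset.mem_univ i),
        ← Finset.sum_erase_add _ (fun j => ε j • v j) (Finset.mem_univ i),
        Finset.sum_congr rfl fun j hj =>
          show ε' j • v j = ε j • v j by simp [ε', Finset.ne_of_mem_erase hj]]
      simp only [ε', Function.update_self]
      module
    rw [← hflip]
    exact hmax ε' hε'

end Signs

lemma exists_norm_eq_one_inv_sqrt_pow_le_abs_prod_inner {E : Type*} [NormedAddCommGroup E]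
    [InnerProductSpace ℝ E] {n : ℕ} (hn0 : 1 ≤ n) (hn : n ≤ 14) (v : Fin n → E)
    (hv : ∀ i, ‖v i‖ = 1) :
    ∃ x : E, ‖x‖ = 1 ∧ (√n ^ n)⁻¹ ≤ |∏ i, ⟪x, v i⟫| := by
  obtain ⟨ε, hε, hr1⟩ := exists_sign_one_le_inner_sum v hv
  set s := ∑ j, ε j • v j
  set r : Fin n → ℝ := fun i => ⟪ε i • v i, s⟫
  have hru : ∀ i, r i ≤ ‖s‖ := fun i => (real_inner_le_norm _ _).trans <| by
    rw [norm_smul, hv, Real.norm_eq_abs, hε, one_mul, one_mul]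
  have hsum : ∑ i, r i = ‖s‖ ^ 2 := by rw [← real_inner_self_eq_norm_sq, sum_inner]
  have hs : 0 < ‖s‖ := zero_lt_one.trans_le ((hr1 ⟨0, hn0⟩).trans (hru _))
  have hcore := pow_le_sqrt_pow_mul_prod hn0 hn (r := r) ⟨fun i _ => ⟨hr1 i, hru i⟩, hsum⟩
  refine ⟨‖s‖⁻¹ • s, by rw [norm_smul, norm_inv, norm_norm, inv_mul_cancel₀ hs.ne'], ?_⟩
  have habs : ∀ i, |⟪‖s‖⁻¹ • s, v i⟫| = ‖s‖⁻¹ * r i := fun i => by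
    have : |⟪s, v i⟫| = r i := calc
      |⟪s, v i⟫| = |ε i| * |⟪v i, s⟫| := by rw [hε, one_mul, real_inner_comm]
      _ = |r i| := by rw [← abs_mul, ← real_inner_smul_left]
      _ = r i := abs_of_pos (zero_lt_one.trans_le (hr1 i))
    rw [real_inner_smul_left, abs_mul, abs_inv, abs_norm, this]
  rw [Finset.abs_prod, Finset.prod_congr rfl fun i _ => habs i, Finset.prod_mul_distrib,
    Finset.prod_const, Finset.card_univ, Fintype.card_fin, inv_pow, inv_mul_eq_div,
    le_div_iff₀ (by positivity), inv_mul_le_iff₀ (by positivity)]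
  exact hcore

lemma rpow_neg_natCast_div_two {x : ℝ} (hx : 0 ≤ x) (n : ℕ) :
    x ^ (-(n : ℝ) / 2) = (√x ^ n)⁻¹ := by
  rw [Real.sqrt_eq_rpow, ← Real.rpow_natCast, ← Real.rpow_mul hx, ← Real.rpow_neg hx]
  ring_nf

/-- For every integer `n` with `2 ≤ n ≤ 14` and every collection of unit vectors
`v 0, …, v (n-1)` in `ℝⁿ`, one has
`sup_{‖x‖ = 1} |⟨x, v₁⟩ ⋯ ⟨x, vₙ⟩| ≥ n ^ (-n/2)`. -/
theorem stmt_0 (n : ℕ) (hn : 2 ≤ n) (hn' : n ≤ 14)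
    (v : Fin n → EuclideanSpace ℝ (Fin n)) (hv : ∀ i, ‖v i‖ = 1) :
    (n : ℝ) ^ (-(n : ℝ) / 2) ≤
      sSup {y : ℝ | ∃ x : EuclideanSpace ℝ (Fin n), ‖x‖ = 1 ∧ y = |∏ i, ⟪x, v i⟫|} := by
  obtain ⟨x, hx, hle⟩ := exists_norm_eq_one_inv_sqrt_pow_le_abs_prod_inner (by omega) hn' v hv
  rw [rpow_neg_natCast_div_two n.cast_nonneg]
  refine hle.trans (le_csSup ⟨1, ?_⟩ ⟨x, hx, rfl⟩)
  rintro _ ⟨y, hy, rfl⟩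
  rw [Finset.abs_prod]
  exact Finset.prod_le_one (fun _ _ => abs_nonneg _) fun i _ =>
    (abs_real_inner_le_norm _ _).trans (by rw [hy, hv, one_mul])
end

section
/- Let n ≥ 1 and let v₁, …, vₙ be unit vectors in ℝⁿ such that v = ∑_{i=1}^{n} vᵢ satisfies ‖v‖ ≥ ‖∑_{i=1}^{n} εᵢ vᵢ‖ for every choice of signs ε₁, …, εₙ ∈ {-1, 1}. Then ⟨vᵢ, v⟩ ≥ 1 for every 1 ≤ i ≤ n, and √n ≤ ‖v‖ ≤ n. -/
/-!
Flipping the sign of `vᵢ` in a longest sum `v` gives `v - 2vᵢ`, and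
`‖v - 2vᵢ‖² = ‖v‖² - 4⟨vᵢ, v⟩ + 4`, so maximality forces `⟨vᵢ, v⟩ ≥ 1`. Summing over `i` gives
`‖v‖² = ∑ ⟨vᵢ, v⟩ ≥ n`, and `‖v‖ ≤ n` is the triangle inequality.
-/

open scoped RealInnerProductSpace

variable {ι E : Type*} [Fintype ι] [NormedAddCommGroup E] [InnerProductSpace ℝ E]

def IsLongestSignedSum (v : ι → E) : Prop :=
  ∀ ε : ι → ℝ, (∀ i, ε i = 1 ∨ ε i = -1) → ‖∑ i, ε i • v i‖ ≤ ‖∑ i, v i‖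

theorem sum_update_one_neg_one_smul {R M : Type*} [Ring R] [AddCommGroup M] [Module R M]
    [DecidableEq ι] (v : ι → M) (i : ι) :
    ∑ j, Function.update (1 : ι → R) i (-1) j • v j = ∑ j, v j - (2 : R) • v i := by
  have hterm : ∀ j,
      Function.update (1 : ι → R) i (-1) j • v j = v j - (Pi.single i (2 : R) : ι → R) j • v j := by
    intro j
    rcases eq_or_ne j i with rfl | hj
    · simp only [Function.update_self, Pi.single_eq_same, neg_one_smul, two_smul]
      abel
    · simp [hj]
  simp [hterm, Finset.sum_sub_distrib, Pi.single_apply]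

theorem norm_sq_le_inner_of_norm_sub_two_smul_le {x s : E} (h : ‖s - (2 : ℝ) • x‖ ≤ ‖s‖) :
    ‖x‖ ^ 2 ≤ ⟪x, s⟫ := by
  have hexpand : ‖s - (2 : ℝ) • x‖ ^ 2 = ‖s‖ ^ 2 - 4 * ⟪x, s⟫ + 4 * ‖x‖ ^ 2 := by
    rw [norm_sub_sq_real, norm_smul, real_inner_smul_right, real_inner_comm, Real.norm_two]
    ring
  nlinarith [norm_nonneg (s - (2 : ℝ) • x)]

theorem IsLongestSignedSum.one_le_inner_sum {v : ι → E} (hv : ∀ i, ‖v i‖ = 1)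
    (h : IsLongestSignedSum v) (i : ι) : 1 ≤ ⟪v i, ∑ j, v j⟫ := by
  classical
  have hflip := h (Function.update 1 i (-1)) fun j => by
    by_cases hj : j = i <;> simp [hj]
  rw [sum_update_one_neg_one_smul] at hflip
  simpa [hv i] using norm_sq_le_inner_of_norm_sub_two_smul_le hflip

theorem sqrt_card_le_norm_sum {v : ι → E} (hv : ∀ i, 1 ≤ ⟪v i, ∑ j, v j⟫) :
    √(Fintype.card ι) ≤ ‖∑ i, v i‖ := by
  have hsq : (Fintype.card ι : ℝ) ≤ ‖∑ i, v i‖ ^ 2 := by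
    rw [← real_inner_self_eq_norm_sq, sum_inner]
    simpa using Finset.sum_le_sum fun i (_ : i ∈ Finset.univ) => hv i
  exact (Real.sqrt_le_left (norm_nonneg _)).2 hsq

theorem stmt_5_general (n : ℕ)
    (v : Fin n → EuclideanSpace ℝ (Fin n)) (hv : ∀ i, ‖v i‖ = 1)
    (h : ∀ ε : Fin n → ℝ, (∀ i, ε i = 1 ∨ ε i = -1) → ‖∑ i, ε i • v i‖ ≤ ‖∑ i, v i‖) :
    (∀ i, 1 ≤ ⟪v i, ∑ j, v j⟫) ∧
      Real.sqrt n ≤ ‖∑ i, v i‖ ∧ ‖∑ i, v i‖ ≤ (n : ℝ) := by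
  have hinner : ∀ i, 1 ≤ ⟪v i, ∑ j, v j⟫ := IsLongestSignedSum.one_le_inner_sum hv h
  refine ⟨hinner, by simpa using sqrt_card_le_norm_sum hinner, ?_⟩
  calc ‖∑ i, v i‖ ≤ ∑ i, ‖v i‖ := norm_sum_le _ _
    _ = n := by simp [hv]

/-- If `v = ∑ vᵢ` is a longest signed sum of the unit vectors `v₁, …, vₙ` in `ℝⁿ`,
then `⟨vᵢ, v⟩ ≥ 1` for all `i`, and `√n ≤ ‖v‖ ≤ n`. -/
theorem stmt_5 (n : ℕ) (hn : 1 ≤ n)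
    (v : Fin n → EuclideanSpace ℝ (Fin n)) (hv : ∀ i, ‖v i‖ = 1)
    (h : ∀ ε : Fin n → ℝ, (∀ i, ε i = 1 ∨ ε i = -1) → ‖∑ i, ε i • v i‖ ≤ ‖∑ i, v i‖) :
    (∀ i, 1 ≤ ⟪v i, ∑ j, v j⟫) ∧
      Real.sqrt n ≤ ‖∑ i, v i‖ ∧ ‖∑ i, v i‖ ≤ (n : ℝ) :=
  stmt_5_general n v hv h
end

section
/- Let n ≥ 2 be an integer, let s ∈ [√n, n], and set k₀(s) = min{k ∈ ℕ, k ≥ 1 : n - k < s - k/s}. Then the minimum of f(a) = a₁a₂⋯aₙ over Σ_s = {a ∈ [1/s, 1]ⁿ : ∑_{i=1}^{n} aᵢ = s} equals μ(s) = s^{1-k₀(s)} · (s - (k₀(s)-1)/s - n + k₀(s)). -/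
/-!
If two coordinates of a point of `Σ_s` lie strictly inside `[1/s, 1]`, pushing them apart with
their sum fixed until one of them reaches the boundary does not increase the product. Iterating,
every point of `Σ_s` can be replaced by one with at most one interior coordinate and no larger
product. Such a point has `j` coordinates `1/s`, one coordinate `t ∈ (1/s, 1]` and all others `1`,
and the sum constraint forces `t = s - j/s - n + j + 1`. Now `t ∈ (1/s, 1]` says exactly that
`j + 1` is the least `k` with `n - k < s - k/s`, so `j + 1 = k₀(s)` and the product is
`s^(-j) t = μ(s)`. The minimum is attained because `Σ_s` contains the constant point `s/n`.
-/

open Finset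

lemma exists_spread_mul_le {l u x y : ℝ} (hx : x ∈ Set.Icc l u) (hy : y ∈ Set.Icc l u) :
    ∃ x' ∈ Set.Icc l u, x + y - x' ∈ Set.Icc l u ∧ x' * (x + y - x') ≤ x * y ∧
      (x' = l ∨ x + y - x' = u) := by
  obtain ⟨hxl, hxu⟩ := hx
  obtain ⟨hyl, hyu⟩ := hy
  have hx' : max l (x + y - u) ≤ x := max_le hxl (by linarith)
  have hy' : max l (x + y - u) ≤ y := max_le hyl (by linarith)
  refine ⟨max l (x + y - u), ⟨le_max_left _ _, hx'.trans hxu⟩,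
    ⟨by linarith, by linarith [le_max_right l (x + y - u)]⟩, ?_, ?_⟩
  -- `x * y - x' * (x + y - x') = (x - x') * (y - x')`
  · nlinarith [mul_nonneg (sub_nonneg.2 hx') (sub_nonneg.2 hy')]
  · rcases max_choice l (x + y - u) with h | h
    · exact Or.inl h
    · right; rw [h]; ring

@[to_additive]
lemma prod_eq_mul_mul_prod_compl_pair {ι M : Type*} [Fintype ι] [DecidableEq ι] [CommMonoid M]
    (f : ι → M) {i j : ι} (hij : i ≠ j) : ∏ k, f k = f i * f j * ∏ k ∈ {i, j}ᶜ, f k := by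
  rw [← prod_mul_prod_compl {i, j}, prod_pair hij]

theorem exists_sum_eq_prod_le_card_mem_Ioo_le_one {ι : Type*} [Fintype ι] [DecidableEq ι]
    {l u : ℝ} (hl : 0 ≤ l) (a : ι → ℝ) (ha : ∀ i, a i ∈ Set.Icc l u) :
    ∃ b : ι → ℝ, (∀ i, b i ∈ Set.Icc l u) ∧ ∑ i, b i = ∑ i, a i ∧ ∏ i, b i ≤ ∏ i, a i ∧
      #{i | b i ∈ Set.Ioo l u} ≤ 1 := by
  induction hN : #{i | a i ∈ Set.Ioo l u} using Nat.strong_induction_on generalizing a with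
  | _ N ih =>
  by_cases hN1 : N ≤ 1
  · exact ⟨a, ha, rfl, le_rfl, hN ▸ hN1⟩
  obtain ⟨i, hi, j, hj, hij⟩ := one_lt_card.mp (hN ▸ not_le.mp hN1)
  obtain ⟨x, hx, hy, hmul, hbdry⟩ := exists_spread_mul_le (ha i) (ha j)
  set a' := Function.update (Function.update a i x) j (a i + a j - x)
  have ha'i : a' i = x := by simp [a', hij]
  have ha'j : a' j = a i + a j - x := by simp [a']
  have ha'k : ∀ k ∈ ({i, j} : Finset ι)ᶜ, a' k = a k := by
    intro k hk
    simp only [mem_compl, mem_insert, mem_singleton, not_or] at hk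
    simp [a', hk.1, hk.2]
  have ha' : ∀ k, a' k ∈ Set.Icc l u := by
    intro k
    by_cases hk : k ∈ ({i, j} : Finset ι)ᶜ
    · exact ha'k k hk ▸ ha k
    · simp only [mem_compl, mem_insert, mem_singleton, not_not] at hk
      rcases hk with rfl | rfl
      · exact ha'i ▸ hx
      · exact ha'j ▸ hy
  have hsub : ({k | a' k ∈ Set.Ioo l u} : Finset ι) ⊂ ({k | a k ∈ Set.Ioo l u} : Finset ι) := by
    rw [ssubset_iff_of_subset]
    · rcases hbdry with h | h
      · exact ⟨i, hi, by simp [ha'i, h]⟩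
      · exact ⟨j, hj, by simp [ha'j, h]⟩
    · intro k hk
      by_cases hk' : k ∈ ({i, j} : Finset ι)ᶜ
      · simpa [ha'k k hk'] using hk
      · simp only [mem_compl, mem_insert, mem_singleton, not_not] at hk'
        rcases hk' with rfl | rfl <;> assumption
  obtain ⟨b, hb, hsum, hprod, hcard⟩ := ih _ (hN ▸ card_lt_card hsub) a' ha' rfl
  refine ⟨b, hb, ?_, hprod.trans ?_, hcard⟩
  · rw [hsum, sum_eq_add_add_sum_compl_pair a' hij, sum_eq_add_add_sum_compl_pair a hij,
      sum_congr rfl ha'k, ha'i, ha'j]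
    ring
  · rw [prod_eq_mul_mul_prod_compl_pair a' hij, prod_eq_mul_mul_prod_compl_pair a hij,
      prod_congr rfl ha'k, ha'i, ha'j]
    exact mul_le_mul_of_nonneg_right hmul (prod_nonneg fun k _ ↦ hl.trans (ha k).1)

lemma sum_eq_and_prod_eq_of_forall_eq_or_eq_one {ι : Type*} {S : Finset ι} {b : ι → ℝ} {l : ℝ}
    (h : ∀ k ∈ S, b k = l ∨ b k = 1) :
    ∑ k ∈ S, b k = #{k ∈ S | b k = l} * l + (#S - #{k ∈ S | b k = l} : ℝ) ∧
      ∏ k ∈ S, b k = l ^ #{k ∈ S | b k = l} := by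
  have hone : ∀ k ∈ {k ∈ S | ¬b k = l}, b k = 1 := fun k hk ↦
    ((h k (mem_filter.mp hk).1).resolve_left (mem_filter.mp hk).2)
  have hl : ∀ k ∈ {k ∈ S | b k = l}, b k = l := fun k hk ↦ (mem_filter.mp hk).2
  have hcard : (#{k ∈ S | b k = l} : ℝ) + #{k ∈ S | ¬b k = l} = #S := by
    exact_mod_cast card_filter_add_card_filter_not _
  constructor
  · rw [← sum_filter_add_sum_filter_not S (fun k ↦ b k = l), sum_congr rfl hl,
      sum_congr rfl hone, sum_const, sum_const, nsmul_eq_mul, nsmul_eq_mul]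
    linarith
  · rw [← prod_filter_mul_prod_filter_not S (fun k ↦ b k = l), prod_congr rfl hl,
      prod_congr rfl hone, prod_const, prod_const_one, mul_one]

lemma exists_sum_eq_prod_eq_of_card_mem_Ioo_le_one {ι : Type*} [Fintype ι] [DecidableEq ι]
    {l : ℝ} (hl : l < 1) {b : ι → ℝ} (hb : ∀ i, b i ∈ Set.Icc l 1)
    (hcard : #{i | b i ∈ Set.Ioo l 1} ≤ 1) :
    ∃ j : ℕ, ∃ t ∈ Set.Ioc l 1,
      ∑ i, b i = j * l + t + (Fintype.card ι - j - 1 : ℝ) ∧ ∏ i, b i = l ^ j * t := by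
  have hext : ∀ k, b k ∉ Set.Ioo l 1 → b k = l ∨ b k = 1 := fun k hk ↦ by
    simp only [Set.mem_Ioo, not_and_or, not_lt] at hk
    rcases hk with hk | hk
    · exact Or.inl (le_antisymm hk (hb k).1)
    · exact Or.inr (le_antisymm (hb k).2 hk)
  rcases Nat.le_one_iff_eq_zero_or_eq_one.mp hcard with h0 | h1
  -- with no interior coordinate take `t = 1`; if all coordinates are `l` this `t` is a phantom
  -- coordinate, and `card ι - j - 1 = -1` compensates for it
  · obtain ⟨hsum, hprod⟩ := sum_eq_and_prod_eq_of_forall_eq_or_eq_one (S := univ) fun k _ ↦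
      hext k fun hk ↦ notMem_empty k (card_eq_zero.mp h0 ▸ mem_filter.mpr ⟨mem_univ k, hk⟩)
    refine ⟨#{k | b k = l}, 1, ⟨hl, le_rfl⟩, ?_, by rw [hprod, mul_one]⟩
    rw [hsum, card_univ]
    ring
  · obtain ⟨i, hi⟩ := card_eq_one.mp h1
    have hbi : b i ∈ Set.Ioo l 1 := (mem_filter_univ i).mp (hi ▸ mem_singleton_self i)
    obtain ⟨hsum, hprod⟩ := sum_eq_and_prod_eq_of_forall_eq_or_eq_one (S := {i}ᶜ) fun k hk ↦
      hext k fun hk' ↦ mem_compl.mp hk (hi ▸ mem_filter.mpr ⟨mem_univ k, hk'⟩)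
    refine ⟨#{k ∈ {i}ᶜ | b k = l}, b i, Set.Ioo_subset_Ioc_self hbi, ?_, ?_⟩
    · rw [Fintype.sum_eq_add_sum_compl i, hsum, card_compl, card_singleton,
        Nat.cast_sub (Fintype.card_pos_iff.mpr ⟨i⟩)]
      push_cast
      ring
    · rw [Fintype.prod_eq_mul_prod_compl i, hprod, mul_comm]

lemma isLeast_succ_of_mem_Ioc {n j : ℕ} {s t : ℝ} (hs : 1 < s) (ht : t ∈ Set.Ioc (1 / s) 1)
    (hsum : s = j / s + t + (n - j - 1)) :
    IsLeast {k : ℕ | 1 ≤ k ∧ (n : ℝ) - k < s - k / s} (j + 1) := by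
  have hinv : 1 / s < 1 := (div_lt_one (by linarith)).mpr hs
  refine ⟨⟨Nat.le_add_left 1 j, ?_⟩, fun k ⟨_, hk⟩ ↦ ?_⟩
  · push_cast
    rw [add_div]
    linarith [ht.1]
  · by_contra! hkj
    have hkj' : (k : ℝ) ≤ j := by exact_mod_cast Nat.lt_succ_iff.mp hkj
    -- `k ↦ s - k / s - (n - k)` is increasing, and it is positive at `k` but not at `j`
    have := mul_le_mul_of_nonneg_right hkj' (sub_nonneg.2 hinv.le)
    rw [div_eq_mul_one_div (k : ℝ), div_eq_mul_one_div (j : ℝ)] at *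
    linarith [ht.2]

theorem prod_eq_of_card_mem_Ioo_le_one {n k0 : ℕ} {s : ℝ} (hs : 1 < s)
    (hk0 : IsLeast {k : ℕ | 1 ≤ k ∧ (n : ℝ) - k < s - k / s} k0) {b : Fin n → ℝ}
    (hb : ∀ i, b i ∈ Set.Icc (1 / s) 1) (hsum : ∑ i, b i = s)
    (hcard : #{i | b i ∈ Set.Ioo (1 / s) 1} ≤ 1) :
    ∏ i, b i = s ^ ((1 : ℤ) - k0) * (s - ((k0 : ℝ) - 1) / s - n + k0) := by
  have hs0 : 0 < s := by linarith
  obtain ⟨j, t, ht, hsum', hprod⟩ :=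
    exists_sum_eq_prod_eq_of_card_mem_Ioo_le_one ((div_lt_one hs0).mpr hs) hb hcard
  rw [Fintype.card_fin, hsum] at hsum'
  obtain rfl : k0 = j + 1 :=
    hk0.unique (isLeast_succ_of_mem_Ioc hs ht (by linarith [mul_one_div (j : ℝ) s]))
  rw [hprod, show (1 : ℤ) - (j + 1 : ℕ) = -j by push_cast; ring, zpow_neg, zpow_natCast,
    one_div, inv_pow]
  congr 1
  push_cast
  rw [add_sub_cancel_right, ← mul_one_div]
  linarith

/-- For `n ≥ 2`, `s ∈ [√n, n]` and `k₀(s) = min {k ≥ 1 : n - k < s - k/s}`, the minimum of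
`a₁⋯aₙ` over `Σ_s = {a ∈ [1/s, 1]ⁿ : ∑ aᵢ = s}` equals
`s^(1-k₀(s)) (s - (k₀(s)-1)/s - n + k₀(s))`. -/
theorem stmt_9 (n : ℕ) (hn : 2 ≤ n) (s : ℝ) (hs : s ∈ Set.Icc (Real.sqrt n) (n : ℝ))
    (k0 : ℕ) (hk0 : IsLeast {k : ℕ | 1 ≤ k ∧ (n : ℝ) - k < s - k / s} k0) :
    IsLeast
      {y : ℝ | ∃ a : Fin n → ℝ, (∀ i, a i ∈ Set.Icc (1 / s) 1) ∧ ∑ i, a i = s ∧ y = ∏ i, a i}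
      (s ^ ((1 : ℤ) - (k0 : ℤ)) * (s - ((k0 : ℝ) - 1) / s - (n : ℝ) + (k0 : ℝ))) := by
  have hn0 : (0 : ℝ) < n := Nat.cast_pos.mpr (by omega)
  have hs1 : 1 < s := (Real.lt_sqrt_of_sq_lt (by norm_num; exact_mod_cast hn)).trans_le hs.1
  have hs0 : 0 < s := by linarith
  have hconst : ∀ i : Fin n, s / n ∈ Set.Icc (1 / s) 1 := fun _ ↦ by
    rw [Set.mem_Icc, div_le_div_iff₀ hs0 hn0, div_le_one hn0, one_mul, ← sq,
      ← Real.sqrt_le_left hs0.le]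
    exact hs
  constructor
  · obtain ⟨b, hb, hsum, -, hcard⟩ :=
      exists_sum_eq_prod_le_card_mem_Ioo_le_one (by positivity) _ hconst
    rw [sum_const, card_univ, Fintype.card_fin, nsmul_eq_mul, mul_div_cancel₀ _ hn0.ne'] at hsum
    exact ⟨b, hb, hsum, (prod_eq_of_card_mem_Ioo_le_one hs1 hk0 hb hsum hcard).symm⟩
  · rintro _ ⟨a, ha, hsum, rfl⟩
    obtain ⟨b, hb, hsum', hprod, hcard⟩ :=
      exists_sum_eq_prod_le_card_mem_Ioo_le_one (by positivity) a ha
    exact (prod_eq_of_card_mem_Ioo_le_one hs1 hk0 hb (hsum'.trans hsum) hcard).ge.trans hprod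
end

section
/- Let n ≥ 2 be an integer, let s ∈ [√n, n], and set k₀(s) = min{k ∈ ℕ, k ≥ 1 : n - k < s - k/s}. Then n - k₀(s) = ⌊s - k₀(s)/s⌋. -/
lemma sub_div_lt_sub_add_one_of_pred {n k s : ℝ} (hs : 0 < s)
    (hpred : s - (k - 1) / s ≤ n - (k - 1)) : s - k / s < n - k + 1 := by
  have hshift : s - (k - 1) / s = s - k / s + 1 / s := by ring
  have : 0 < 1 / s := one_div_pos.mpr hs
  linarith

/-- For `n ≥ 2`, `s ∈ [√n, n]` and `k₀(s) = min {k ≥ 1 : n - k < s - k/s}`, one has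
`n - k₀(s) = ⌊s - k₀(s)/s⌋`. -/
theorem stmt_11 (n : ℕ) (hn : 2 ≤ n) (s : ℝ) (hs : s ∈ Set.Icc (Real.sqrt n) (n : ℝ))
    (k0 : ℕ) (hk0 : IsLeast {k : ℕ | 1 ≤ k ∧ (n : ℝ) - k < s - k / s} k0) :
    (n : ℤ) - (k0 : ℤ) = Int.floor (s - (k0 : ℝ) / s) := by
  obtain ⟨⟨hk1, hlt⟩, hmin⟩ := hk0
  have hs0 : 0 < s :=
    lt_of_lt_of_le (Real.sqrt_pos.mpr (by exact_mod_cast (by omega : 0 < n))) hs.1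
  -- The defining inequality fails at `k₀ - 1`: by minimality if `k₀ ≥ 2`, and because `s ≤ n` if `k₀ = 1`.
  have hpred : s - ((k0 : ℝ) - 1) / s ≤ n - ((k0 : ℝ) - 1) := by
    rcases hk1.eq_or_lt with rfl | hk2
    · simpa using hs.2
    · have hnot : k0 - 1 ∉ {k : ℕ | 1 ≤ k ∧ (n : ℝ) - k < s - k / s} :=
        fun h => absurd (hmin h) (by omega)
      simp only [Set.mem_ofPred_eq, not_and, not_lt] at hnot
      simpa [Nat.cast_sub hk1] using hnot (by omega)
  rw [eq_comm, Int.floor_eq_iff]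
  push_cast
  exact ⟨hlt.le, sub_div_lt_sub_add_one_of_pred hs0 hpred⟩
end

section
/- Let n ≥ 2 be an integer and define μ : [√n, n] → ℝ by μ(s) = min{a₁a₂⋯aₙ : a ∈ [1/s, 1]ⁿ, ∑_{i=1}^{n} aᵢ = s}. Then μ is lower semicontinuous on [√n, n]. -/
/-!
Berge's argument: `μ(s)` is the minimum of the continuous function `a ↦ ∏ aᵢ` over the fibre
`Σ_s` of the set `{(s, a) : s ∈ [√n, n], a ∈ Σ_s}`, which is compact. If `z < μ(s₀)`, the
parameters `s` over which some point of the fibre has product `≤ z` are the projection of a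
compact set, hence form a closed set missing `s₀`; off this set `μ > z`.
-/

open Set

theorem IsCompact.lowerSemicontinuousOn_sInf_image {X Y β : Type*} [TopologicalSpace X]
    [T2Space X] [TopologicalSpace Y] [ConditionallyCompleteLinearOrder β] [TopologicalSpace β]
    [ClosedIicTopology β] {F : X → Set Y} {s : Set X}
    (hF : IsCompact {p : X × Y | p.1 ∈ s ∧ p.2 ∈ F p.1}) (hne : ∀ x ∈ s, (F x).Nonempty)
    {f : Y → β} (hf : Continuous f) :
    LowerSemicontinuousOn (fun x => sInf (f '' F x)) s := by
  set G := {p : X × Y | p.1 ∈ s ∧ p.2 ∈ F p.1}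
  have hfiber : ∀ x ∈ s, IsCompact (f '' F x) := by
    intro x hx
    have : F x = Prod.snd '' (G ∩ Prod.fst ⁻¹' {x}) := by
      ext y
      constructor
      · intro hy; exact ⟨(x, y), ⟨⟨hx, hy⟩, rfl⟩, rfl⟩
      · rintro ⟨⟨x', y⟩, ⟨⟨-, hy⟩, rfl⟩, rfl⟩; exact hy
    rw [this]
    exact ((hF.inter_right (isClosed_singleton.preimage continuous_fst)).image
      continuous_snd).image hf
  intro x₀ hx₀ z hz
  have hbad : IsClosed (Prod.fst '' (G ∩ (f ∘ Prod.snd) ⁻¹' Iic z)) :=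
    ((hF.inter_right (isClosed_Iic.preimage (hf.comp continuous_snd))).image
      continuous_fst).isClosed
  have hx₀bad : x₀ ∉ Prod.fst '' (G ∩ (f ∘ Prod.snd) ⁻¹' Iic z) := by
    rintro ⟨⟨x, y⟩, ⟨⟨-, hy⟩, hfy⟩, rfl⟩
    exact hz.not_ge ((csInf_le (hfiber x hx₀).bddBelow (mem_image_of_mem f hy)).trans hfy)
  filter_upwards [nhdsWithin_le_nhds (hbad.isOpen_compl.mem_nhds hx₀bad), self_mem_nhdsWithin]
    with x hxbad hx
  obtain ⟨y, hy, hfy⟩ := (hfiber x hx).sInf_mem ((hne x hx).image f)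
  rw [← hfy]
  by_contra! hle
  exact hxbad ⟨(x, y), ⟨⟨hx, hy⟩, hle⟩, rfl⟩

/-- The set `Σ_s`. -/
def cubeSlice (n : ℕ) (s : ℝ) : Set (Fin n → ℝ) :=
  {a | (∀ i, a i ∈ Icc (1 / s) 1) ∧ ∑ i, a i = s}

theorem isCompact_cubeSlice_graph (n : ℕ) {K : Set ℝ} (hK : IsCompact K)
    (hK0 : ∀ s ∈ K, 0 < s) :
    IsCompact {p : ℝ × (Fin n → ℝ) | p.1 ∈ K ∧ p.2 ∈ cubeSlice n p.1} := by
  have hbox : IsCompact (K ×ˢ univ.pi fun _ : Fin n => Icc (0 : ℝ) 1) :=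
    hK.prod (isCompact_univ_pi fun _ => isCompact_Icc)
  -- `1 / s ≤ aᵢ` is not a closed condition near `s = 0`; cleared of denominators it is
  have hclosed : IsClosed {p : ℝ × (Fin n → ℝ) |
      (∀ i, 1 ≤ p.2 i * p.1 ∧ p.2 i ≤ 1) ∧ ∑ i, p.2 i = p.1} := by
    simp only [ofPred_and, ofPred_forall]
    refine (isClosed_iInter fun i => (isClosed_le ?_ ?_).inter (isClosed_le ?_ ?_)).inter
      (isClosed_eq ?_ ?_) <;> fun_prop
  convert hbox.inter_right hclosed using 1
  ext ⟨s, a⟩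
  simp only [cubeSlice, mem_ofPred_eq, mem_inter_iff, mem_prod, mem_pi, mem_univ, true_implies,
    mem_Icc]
  constructor
  · rintro ⟨hs, ha, hsum⟩
    have h0 := hK0 s hs
    refine ⟨⟨hs, fun i => ⟨(by positivity : 0 < 1 / s).le.trans (ha i).1, (ha i).2⟩⟩,
      fun i => ⟨(div_le_iff₀ h0).1 (ha i).1, (ha i).2⟩, hsum⟩
  · rintro ⟨⟨hs, -⟩, ha, hsum⟩
    exact ⟨hs, fun i => ⟨(div_le_iff₀ (hK0 s hs)).2 (ha i).1, (ha i).2⟩, hsum⟩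

theorem const_mem_cubeSlice {n : ℕ} (hn : 0 < n) {s : ℝ} (hs : s ∈ Icc (Real.sqrt n) n) :
    (fun _ => s / n) ∈ cubeSlice n s := by
  have hn0 : (0 : ℝ) < n := by exact_mod_cast hn
  have hs0 : 0 < s := (Real.sqrt_pos.2 hn0).trans_le hs.1
  refine ⟨fun _ => ⟨?_, (div_le_one hn0).2 hs.2⟩, ?_⟩
  · rw [div_le_div_iff₀ hs0 hn0, one_mul, ← sq]
    exact (Real.sqrt_le_iff.1 hs.1).2
  · simp [Finset.sum_const, Finset.card_univ, nsmul_eq_mul, mul_div_cancel₀ _ hn0.ne']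

/-- For `n ≥ 2`, the function `μ(s) = min {a₁⋯aₙ : a ∈ [1/s, 1]ⁿ, ∑ aᵢ = s}` is lower
semicontinuous on `[√n, n]`. -/
theorem stmt_12 (n : ℕ) (hn : 2 ≤ n) :
    LowerSemicontinuousOn
      (fun s : ℝ => sInf
        {y : ℝ | ∃ a : Fin n → ℝ, (∀ i, a i ∈ Set.Icc (1 / s) 1) ∧ ∑ i, a i = s ∧ y = ∏ i, a i})
      (Set.Icc (Real.sqrt n) (n : ℝ)) := by
  have hn0 : 0 < n := by omega
  have hpos : ∀ s ∈ Icc (Real.sqrt n) (n : ℝ), 0 < s := fun s hs =>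
    (Real.sqrt_pos.2 (by exact_mod_cast hn0)).trans_le hs.1
  have himage : ∀ s : ℝ,
      {y : ℝ | ∃ a : Fin n → ℝ, (∀ i, a i ∈ Icc (1 / s) 1) ∧ ∑ i, a i = s ∧ y = ∏ i, a i} =
        (fun a => ∏ i, a i) '' cubeSlice n s := by
    intro s
    ext y
    simp only [cubeSlice, mem_image, mem_ofPred_eq, eq_comm, and_assoc]
  simp_rw [himage]
  exact (isCompact_cubeSlice_graph n isCompact_Icc hpos).lowerSemicontinuousOn_sInf_image
    (fun s hs => ⟨_, const_mem_cubeSlice hn0 hs⟩)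
    (continuous_finsetProd Finset.univ fun i _ => continuous_apply i)
end

section
/- Let n ≥ 2 be an integer and for 0 ≤ j ≤ n let s_j = ((n-j) + √((n-j)² + 4j))/2 be the positive root of x² - (n-j)x - j = 0. Then μ(s_j) = s_j^{-j}, where μ(s) = min{a₁a₂⋯aₙ : a ∈ [1/s, 1]ⁿ, ∑_{i=1}^{n} aᵢ = s}. -/
/-!
Since `log` is concave, on `[1/s, 1]` it lies above its chord, `(s - 1) log x ≥ (x - 1) s log s`.
Summing over the coordinates of a point with `∑ aᵢ = s` bounds `log ∏ aᵢ` below by a quantity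
depending only on `s` and `n`; for `s = s_j` the quadratic `s² = (n - j)s + j` turns this bound
into `-j log s`. It is attained at the point with `j` coordinates equal to `1/s` and the others
equal to `1`, whose coordinate sum is `j/s + n - j = s` by the same quadratic.
-/

open Finset Real

lemma Real.chord_le_log_of_mem_Icc {s x : ℝ} (hs : 1 < s) (hx : x ∈ Set.Icc (1 / s) 1) :
    (x - 1) * (s * log s) ≤ (s - 1) * log x := by
  have hs0 : 0 < s := one_pos.trans hs
  have hs1 : 0 < s - 1 := sub_pos.2 hs
  have hxs : 1 ≤ x * s := (div_le_iff₀ hs0).1 hx.1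
  -- `x = t • s⁻¹ + (1 - t) • 1` with the weight below
  set t := (1 - x) * s / (s - 1) with ht
  have ht0 : 0 ≤ t := div_nonneg (mul_nonneg (sub_nonneg.2 hx.2) hs0.le) hs1.le
  have ht1 : 0 ≤ 1 - t := by
    rw [sub_nonneg, div_le_one hs1]
    linarith
  have hconc := strictConcaveOn_log_Ioi.concaveOn.2 (Set.mem_Ioi.2 (inv_pos.2 hs0))
    (Set.mem_Ioi.2 one_pos) ht0 ht1 (add_sub_cancel t 1)
  have hcomb : t • s⁻¹ + (1 - t) • (1 : ℝ) = x := by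
    rw [ht, smul_eq_mul, smul_eq_mul]
    field_simp
    ring
  rw [hcomb, smul_eq_mul, smul_eq_mul, log_inv, log_one, mul_zero, add_zero, ht] at hconc
  calc (x - 1) * (s * log s) = (s - 1) * ((1 - x) * s / (s - 1) * -log s) := by
        field_simp
        ring
    _ ≤ (s - 1) * log x := mul_le_mul_of_nonneg_left hconc hs1.le

lemma Real.sum_sub_card_mul_le_log_prod {ι : Type*} [Fintype ι] {s : ℝ} (hs : 1 < s)
    {a : ι → ℝ} (ha : ∀ i, a i ∈ Set.Icc (1 / s) 1) :
    (∑ i, a i - Fintype.card ι) * (s * log s) ≤ (s - 1) * log (∏ i, a i) := by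
  have hpos : ∀ i, a i ≠ 0 := fun i =>
    ((one_div_pos.2 (one_pos.trans hs)).trans_le (ha i).1).ne'
  calc (∑ i, a i - Fintype.card ι) * (s * log s) = ∑ i, (a i - 1) * (s * log s) := by
        rw [← sum_mul, sum_sub_distrib, sum_const, card_univ, nsmul_one]
    _ ≤ ∑ i, (s - 1) * log (a i) := sum_le_sum fun i _ => chord_le_log_of_mem_Icc hs (ha i)
    _ = (s - 1) * log (∏ i, a i) := by rw [log_prod fun i _ => hpos i, mul_sum]

lemma exists_mem_Icc_sum_eq_prod_eq {ι : Type*} [Fintype ι] {s : ℝ} (hs : 1 < s) {j : ℕ}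
    (hj : j ≤ Fintype.card ι) (hquad : s ^ 2 = (Fintype.card ι - j) * s + j) :
    ∃ a : ι → ℝ, (∀ i, a i ∈ Set.Icc (1 / s) 1) ∧ ∑ i, a i = s ∧ (s ^ j)⁻¹ = ∏ i, a i := by
  classical
  have hs0 : 0 < s := one_pos.trans hs
  have hinv : 1 / s ≤ 1 := (div_le_one hs0).2 hs.le
  obtain ⟨T, -, hT⟩ := (univ : Finset ι).exists_subset_card_eq (n := j) (by rwa [card_univ])
  refine ⟨fun i => if i ∈ T then 1 / s else 1, fun i => ?_, ?_, ?_⟩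
  · dsimp only
    split_ifs
    exacts [⟨le_rfl, hinv⟩, ⟨hinv, le_rfl⟩]
  · simp only [sum_ite, subset_univ, filter_mem_eq_of_subset, sum_const, hT, nsmul_eq_mul,
      mul_one]
    rw [filter_notMem_eq_sdiff, card_univ_sdiff, hT, Nat.cast_sub hj]
    field_simp
    linear_combination -hquad
  · simp only [one_div, prod_ite_mem, univ_inter, prod_inv_distrib, prod_const, hT]

theorem isLeast_prod_of_sq_eq {ι : Type*} [Fintype ι] {s : ℝ} (hs : 1 < s) {j : ℕ}
    (hj : j ≤ Fintype.card ι) (hquad : s ^ 2 = (Fintype.card ι - j) * s + j) :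
    IsLeast {y | ∃ a : ι → ℝ, (∀ i, a i ∈ Set.Icc (1 / s) 1) ∧ ∑ i, a i = s ∧ y = ∏ i, a i}
      (s ^ j)⁻¹ := by
  refine ⟨exists_mem_Icc_sum_eq_prod_eq hs hj hquad, ?_⟩
  rintro _ ⟨a, ha, hsum, rfl⟩
  have hs0 : 0 < s := one_pos.trans hs
  have hprod : 0 < ∏ i, a i :=
    prod_pos fun i _ => (one_div_pos.2 hs0).trans_le (ha i).1
  have hlog := sum_sub_card_mul_le_log_prod hs ha
  rw [← log_le_log_iff (by positivity) hprod, log_inv, log_pow]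
  refine le_of_mul_le_mul_left ?_ (sub_pos.2 hs)
  calc (s - 1) * -(j * log s) = (∑ i, a i - Fintype.card ι) * (s * log s) := by
        rw [hsum]
        linear_combination (-log s) * hquad
    _ ≤ (s - 1) * log (∏ i, a i) := hlog

lemma one_lt_of_eq_quadratic_root {c d s : ℝ} (hcd : 1 < c + d)
    (hs : s = (c + √(c ^ 2 + 4 * d)) / 2) : 1 < s := by
  have : 2 - c < √(c ^ 2 + 4 * d) := Real.lt_sqrt_of_sq_lt (by linarith)
  rw [hs]
  linarith

lemma sq_eq_of_eq_quadratic_root {c d s : ℝ} (hd : 0 ≤ c ^ 2 + 4 * d)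
    (hs : s = (c + √(c ^ 2 + 4 * d)) / 2) : s ^ 2 = c * s + d := by
  rw [hs]
  linear_combination (1 / 4 : ℝ) * Real.sq_sqrt hd

/-- For `n ≥ 2` and `0 ≤ j ≤ n`, with `s_j` the positive root of `x² - (n-j)x - j = 0`,
one has `μ(s_j) = s_j ^ (-j)`. -/
theorem stmt_13 (n : ℕ) (hn : 2 ≤ n) (j : ℕ) (hj : j ≤ n) (sj : ℝ)
    (hsj : sj = (((n : ℝ) - j) + Real.sqrt (((n : ℝ) - j) ^ 2 + 4 * j)) / 2) :
    sInf {y : ℝ | ∃ a : Fin n → ℝ,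
        (∀ i, a i ∈ Set.Icc (1 / sj) 1) ∧ ∑ i, a i = sj ∧ y = ∏ i, a i}
      = sj ^ (-(j : ℤ)) := by
  have hs : 1 < sj := one_lt_of_eq_quadratic_root (by rw [sub_add_cancel]; exact_mod_cast hn) hsj
  have hquad := sq_eq_of_eq_quadratic_root (by positivity) hsj
  rw [zpow_neg, zpow_natCast]
  exact (isLeast_prod_of_sq_eq hs (by simpa using hj) (by simpa using hquad)).csInf_eq
end

section
/- Let j, n ∈ ℕ with n ≥ 2 and 1 ≤ j ≤ n, and let s_j = ((n-j) + √((n-j)² + 4j))/2 and s_{j-1} = ((n-j+1) + √((n-j+1)² + 4(j-1)))/2. Then the function M_j : [s_j, s_{j-1}] → ℝ defined by M_j(x) = x^{2-j} + (j-n)x^{1-j} + (1-j)x^{-j} is quasi-concave; in particular, min_{x ∈ [s_j, s_{j-1}]} M_j(x) = min(M_j(s_j), M_j(s_{j-1})). -/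
/-!
Writing `M_j' x = x ^ (-j-1) * Q x` with `Q x = (2 - j) x² + (n - j)(j - 1) x + j (j - 1)`, the
defining equation `s_j² = (n - j) s_j + j` gives `Q s_j = s_j² > 0`. For `j = 1` we have
`Q x = x²`, and for `j ≥ 2` the quadratic `Q` is concave, so in both cases `{x ≥ s_j | Q x ≥ 0}`
is an initial segment of `[s_j, ∞)`. Hence `M_j` increases and then decreases on `[s_j, ∞)`,
which makes it quasi-concave there, and in particular on `[s_j, s_{j-1}]`.
-/

open Set

theorem quasiconcaveOn_of_hasDerivAt {f f' : ℝ → ℝ} {s : Set ℝ} (hs : s.OrdConnected)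
    (hf : ∀ x ∈ s, HasDerivAt f (f' x) x)
    (hf' : ∀ x ∈ s, ∀ y ∈ s, x ≤ y → 0 ≤ f' y → 0 ≤ f' x) :
    QuasiconcaveOn ℝ s f := by
  have hcont : ∀ {a b}, a ∈ s → b ∈ s → ContinuousOn f (Icc a b) := fun ha hb w hw ↦
    (hf w (hs.out ha hb hw)).continuousAt.continuousWithinAt
  have hderiv : ∀ {a b}, a ∈ s → b ∈ s → ∀ w ∈ interior (Icc a b),
      HasDerivWithinAt f (f' w) (interior (Icc a b)) w := fun ha hb w hw ↦
    (hf w (hs.out ha hb (interior_subset hw))).hasDerivWithinAt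
  refine fun r ↦ OrdConnected.convex ⟨fun x hx y hy z hz ↦ ⟨hs.out hx.1 hy.1 hz, ?_⟩⟩
  have hzs := hs.out hx.1 hy.1 hz
  by_cases hz' : 0 ≤ f' z
  · have hmono : MonotoneOn f (Icc x z) :=
      monotoneOn_of_hasDerivWithinAt_nonneg (convex_Icc x z) (hcont hx.1 hzs)
        (hderiv hx.1 hzs) fun w hw ↦
          hf' w (hs.out hx.1 hzs (interior_subset hw)) z hzs (interior_subset hw).2 hz'
    exact hx.2.trans (hmono (left_mem_Icc.2 hz.1) (right_mem_Icc.2 hz.1) hz.1)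
  · have hanti : AntitoneOn f (Icc z y) :=
      antitoneOn_of_hasDerivWithinAt_nonpos (convex_Icc z y) (hcont hzs hy.1)
        (hderiv hzs hy.1) fun w hw ↦ by
          by_contra! hw'
          exact hz' (hf' z hzs w (hs.out hzs hy.1 (interior_subset hw)) (interior_subset hw).1
            hw'.le)
    exact hy.2.trans (hanti (left_mem_Icc.2 hz.2) (right_mem_Icc.2 hz.2) hz.2)

theorem add_sqrt_div_two_pos (a : ℝ) {b : ℝ} (hb : 0 < b) : 0 < (a + √(a ^ 2 + 4 * b)) / 2 := by
  have : |a| < √(a ^ 2 + 4 * b) := by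
    rw [← Real.sqrt_sq_eq_abs]; exact Real.sqrt_lt_sqrt (sq_nonneg a) (by linarith)
  linarith [neg_abs_le a]

theorem add_sqrt_div_two_sq (a : ℝ) {b : ℝ} (hb : 0 ≤ b) :
    ((a + √(a ^ 2 + 4 * b)) / 2) ^ 2 = a * ((a + √(a ^ 2 + 4 * b)) / 2) + b := by
  have := Real.sq_sqrt (by positivity : 0 ≤ a ^ 2 + 4 * b)
  linear_combination this / 4

noncomputable def Mj (n j : ℕ) (x : ℝ) : ℝ :=
  x ^ ((2 : ℤ) - (j : ℤ)) + ((j : ℝ) - n) * x ^ ((1 : ℤ) - (j : ℤ)) + (1 - (j : ℝ)) * x ^ (-(j : ℤ))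

def Qj (n j : ℕ) (x : ℝ) : ℝ :=
  (2 - (j : ℝ)) * x ^ 2 + ((n : ℝ) - j) * ((j : ℝ) - 1) * x + (j : ℝ) * ((j : ℝ) - 1)

theorem hasDerivAt_Mj (n j : ℕ) {x : ℝ} (hx : x ≠ 0) :
    HasDerivAt (Mj n j) (x ^ (-(j : ℤ) - 1) * Qj n j x) x := by
  have h := ((hasDerivAt_zpow (2 - j) x (.inl hx)).add
    ((hasDerivAt_zpow (1 - j) x (.inl hx)).const_mul ((j : ℝ) - n))).add
    ((hasDerivAt_zpow (-j) x (.inl hx)).const_mul (1 - (j : ℝ)))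
  refine h.congr_deriv ?_
  rw [show (2 : ℤ) - j - 1 = -j - 1 + 2 by ring, show (1 : ℤ) - j - 1 = -j - 1 + 1 by ring,
    zpow_add₀ hx, zpow_add₀ hx, zpow_one, zpow_two]
  simp only [Qj]
  push_cast
  ring

theorem Qj_of_sq_eq {n j : ℕ} {s : ℝ} (hs : s ^ 2 = ((n : ℝ) - j) * s + j) : Qj n j s = s ^ 2 := by
  unfold Qj; linear_combination (1 - (j : ℝ)) * hs

theorem Qj_nonneg_of_le {n j : ℕ} (hj : 1 ≤ j) {s z w : ℝ} (hs : s ^ 2 = ((n : ℝ) - j) * s + j)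
    (hsz : s ≤ z) (hzw : z ≤ w) (hw : 0 ≤ Qj n j w) : 0 ≤ Qj n j z := by
  obtain rfl | hj_gt := hj.eq_or_lt
  · norm_num [Qj, sq_nonneg]
  obtain rfl | hs_lt := hsz.eq_or_lt
  · rw [Qj_of_sq_eq hs]; positivity
  have hj2 : (2 : ℝ) ≤ j := by exact_mod_cast hj_gt
  -- Concavity of `Qj` (leading coefficient `2 - j ≤ 0`) at the three points `s < z ≤ w`.
  have key : (w - s) * Qj n j z = (w - z) * s ^ 2 + (z - s) * Qj n j w
      + ((j : ℝ) - 2) * ((z - s) * ((w - z) * (w - s))) := by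
    rw [← Qj_of_sq_eq hs]; unfold Qj; ring
  refine nonneg_of_mul_nonneg_right ?_ (by linarith : 0 < w - s)
  have hzs := sub_nonneg.2 hsz
  have hwz := sub_nonneg.2 hzw
  rw [key]
  exact add_nonneg (add_nonneg (mul_nonneg hwz (sq_nonneg s)) (mul_nonneg hzs hw))
    (mul_nonneg (sub_nonneg.2 hj2) (mul_nonneg hzs (mul_nonneg hwz (by linarith))))

theorem quasiconcaveOn_Mj {n j : ℕ} (hj : 1 ≤ j) {s : ℝ} (hs₀ : 0 < s)
    (hs : s ^ 2 = ((n : ℝ) - j) * s + j) : QuasiconcaveOn ℝ (Ici s) (Mj n j) := by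
  have hpos : ∀ x ∈ Ici s, 0 < x := fun x hx ↦ hs₀.trans_le hx
  refine quasiconcaveOn_of_hasDerivAt ordConnected_Ici
    (fun x hx ↦ hasDerivAt_Mj n j (hpos x hx).ne') fun x hx y hy hxy h ↦ ?_
  have hy' := nonneg_of_mul_nonneg_right h (zpow_pos (hpos y hy) _)
  exact mul_nonneg (zpow_pos (hpos x hx) _).le (Qj_nonneg_of_le hj hs hx hxy hy')

theorem stmt_15_general (n j : ℕ) (hj1 : 1 ≤ j)
    (sj sjm : ℝ)
    (hsj : sj = (((n : ℝ) - j) + Real.sqrt (((n : ℝ) - j) ^ 2 + 4 * j)) / 2)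
    (M : ℝ → ℝ)
    (hM : ∀ x, M x = x ^ ((2 : ℤ) - (j : ℤ)) + ((j : ℝ) - n) * x ^ ((1 : ℤ) - (j : ℤ)) +
      (1 - (j : ℝ)) * x ^ (-(j : ℤ))) :
    (∀ x ∈ Set.Icc sj sjm, ∀ y ∈ Set.Icc sj sjm, ∀ t ∈ Set.Icc (0 : ℝ) 1,
      min (M x) (M y) ≤ M (t * x + (1 - t) * y)) ∧
    ∀ x ∈ Set.Icc sj sjm, min (M sj) (M sjm) ≤ M x := by
  obtain rfl : M = Mj n j := funext hM
  have hsq : sj ^ 2 = ((n : ℝ) - j) * sj + j := hsj ▸ add_sqrt_div_two_sq _ j.cast_nonneg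
  have hpos : 0 < sj := hsj ▸ add_sqrt_div_two_pos _ (by exact_mod_cast hj1)
  have hq : QuasiconcaveOn ℝ (Icc sj sjm) (Mj n j) :=
    Convex.quasiconcaveOn_restrict (quasiconcaveOn_Mj hj1 hpos hsq) Icc_subset_Ici_self
      (convex_Icc _ _)
  refine ⟨fun x hx y hy t ht ↦ ?_, fun x hx ↦ ?_⟩
  · simpa only [smul_eq_mul] using
      (quasiconcaveOn_iff_min_le.1 hq).2 hx hy ht.1 (sub_nonneg.2 ht.2) (add_sub_cancel t 1)
  · have hle := hx.1.trans hx.2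
    exact ((hq _).ordConnected.out ⟨left_mem_Icc.2 hle, min_le_left _ _⟩
      ⟨right_mem_Icc.2 hle, min_le_right _ _⟩ hx).2

/-- For `n ≥ 2` and `1 ≤ j ≤ n`, the function
`M_j(x) = x^(2-j) + (j-n) x^(1-j) + (1-j) x^(-j)` is quasi-concave on `[s_j, s_{j-1}]`;
in particular its minimum on `[s_j, s_{j-1}]` is `min (M_j(s_j)) (M_j(s_{j-1}))`. -/
theorem stmt_15 (n j : ℕ) (hn : 2 ≤ n) (hj1 : 1 ≤ j) (hjn : j ≤ n)
    (sj sjm : ℝ)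
    (hsj : sj = (((n : ℝ) - j) + Real.sqrt (((n : ℝ) - j) ^ 2 + 4 * j)) / 2)
    (hsjm : sjm = (((n : ℝ) - j + 1) +
      Real.sqrt (((n : ℝ) - j + 1) ^ 2 + 4 * ((j : ℝ) - 1))) / 2)
    (M : ℝ → ℝ)
    (hM : ∀ x, M x = x ^ ((2 : ℤ) - (j : ℤ)) + ((j : ℝ) - n) * x ^ ((1 : ℤ) - (j : ℤ)) +
      (1 - (j : ℝ)) * x ^ (-(j : ℤ))) :
    (∀ x ∈ Set.Icc sj sjm, ∀ y ∈ Set.Icc sj sjm, ∀ t ∈ Set.Icc (0 : ℝ) 1,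
      min (M x) (M y) ≤ M (t * x + (1 - t) * y)) ∧
    ∀ x ∈ Set.Icc sj sjm, min (M sj) (M sjm) ≤ M x :=
  stmt_15_general n j hj1 sj sjm hsj M hM
end

section
/- Let n ∈ ℕ with 2 ≤ n ≤ 14 and let 0 ≤ j ≤ n - 1. Then s_j^j < n^{n/2}, where s_j = ((n-j) + √((n-j)² + 4j))/2; that is, the inequality s_j^j ≤ n^{n/2} is strict except when j = n. -/
/-!
`s_j` is the positive root of `x ^ 2 - (n - j) x - j`, so rounding the square root in its formula
upwards (with `Nat.sqrt` at scale `D`) gives a rational upper bound `N / (2 D)` for it. As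
`n ^ (n / 2) = √(n ^ n)`, the claim then follows from the integer inequality
`N ^ (2 j) < n ^ n (2 D) ^ (2 j)`, which the kernel checks for all `n ≤ 14` at once.
-/

theorem Real.rpow_div_two_eq_sqrt_pow {y : ℝ} (hy : 0 ≤ y) (n : ℕ) :
    y ^ ((n : ℝ) / 2) = √(y ^ n) := by
  rw [Real.sqrt_eq_rpow, ← Real.rpow_natCast, ← Real.rpow_mul hy, mul_one_div]

theorem Real.sqrt_le_nat_sqrt_succ_div {D : ℕ} (hD : 0 < D) (m : ℕ) :
    √(m : ℝ) ≤ (Nat.sqrt (D ^ 2 * m) + 1) / D := by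
  have hD' : (0 : ℝ) < D := by exact_mod_cast hD
  rw [le_div_iff₀ hD']
  calc √(m : ℝ) * D = √((D ^ 2 * m : ℕ) : ℝ) := by
        push_cast
        rw [Real.sqrt_mul (by positivity), Real.sqrt_sq hD'.le, mul_comm]
    _ ≤ _ := Real.real_sqrt_le_nat_sqrt_succ

/-- `rootUpperNum D a j / (2 * D)` bounds the positive root `(a + √(a ^ 2 + 4 j)) / 2` of
`x ^ 2 - a x - j` from above, with error at most `1 / (2 * D)`. -/
def rootUpperNum (D a j : ℕ) : ℕ :=
  D * a + Nat.sqrt (D ^ 2 * (a ^ 2 + 4 * j)) + 1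

theorem positiveRoot_le_rootUpperNum {D : ℕ} (hD : 0 < D) (a j : ℕ) :
    ((a : ℝ) + √((a : ℝ) ^ 2 + 4 * j)) / 2 ≤ rootUpperNum D a j / (2 * D) := by
  have hD' : (0 : ℝ) < D := by exact_mod_cast hD
  have hsqrt := Real.sqrt_le_nat_sqrt_succ_div hD (a ^ 2 + 4 * j)
  push_cast at hsqrt
  rw [le_div_iff₀ hD'] at hsqrt
  rw [div_le_div_iff₀ two_pos (by positivity), rootUpperNum]
  push_cast
  nlinarith

/- The margin is tight: at `n = 14, j = 13` the ratio `n ^ (n / 2) / s_j ^ j` is only about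
`1.004`, and at `n = 15, j = 14` it drops below `1`. -/
theorem rootUpperNum_pow_lt :
    ∀ n < 15, ∀ j < n, 2 ≤ n →
      rootUpperNum (10 ^ 3) (n - j) j ^ (2 * j) < n ^ n * (2 * 10 ^ 3) ^ (2 * j) := by
  decide +kernel

/-- For `2 ≤ n ≤ 14` and `0 ≤ j ≤ n - 1`, one has the strict inequality
`s_j ^ j < n ^ (n/2)`, where `s_j = ((n-j) + √((n-j)² + 4j))/2`. -/
theorem stmt_17 (n : ℕ) (hn : 2 ≤ n) (hn' : n ≤ 14) (j : ℕ) (hj : j ≤ n - 1) :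
    ((((n : ℝ) - j) + Real.sqrt (((n : ℝ) - j) ^ 2 + 4 * j)) / 2) ^ j
      < (n : ℝ) ^ ((n : ℝ) / 2) := by
  have hjn : j < n := by omega
  have hroot := positiveRoot_le_rootUpperNum (D := 10 ^ 3) (by positivity) (n - j) j
  have hcheck :
      ((rootUpperNum (10 ^ 3) (n - j) j : ℝ) / (2 * (10 ^ 3 : ℕ))) ^ (2 * j) < (n : ℝ) ^ n := by
    rw [div_pow, div_lt_iff₀ (by positivity)]
    exact_mod_cast rootUpperNum_pow_lt n (by omega) j hjn hn
  rw [← Nat.cast_sub hjn.le, Real.rpow_div_two_eq_sqrt_pow (Nat.cast_nonneg n)]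
  calc _ ≤ _ := pow_le_pow_left₀ (by positivity) hroot j
    _ < _ := (Real.lt_sqrt (by positivity)).mpr (by rwa [← pow_mul'])
end
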